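/- In the formal power series ring ℤ[x,y][[q]], the series ∑_λ m(λ)·x^{ℓ_d(λ)}·y^{ℓ_d^o(λ)}·q^{|λ|}, summed over all partitions λ into odd parts (including the empty partition), equals the infinite product ∏_{m≥1} ( 1 + 2x·q^{4m−2}/(1−q^{4m−2})² + xy·q^{2m−1}(1+q^{4m−2})/(1−q^{4m−2})² ). -/

import Mathlib

/-!
Write `w(c) = c·x·y^(c mod 2)` for the contribution of a part size of multiplicity `c ≥ 1` to
`m(λ) x^{ℓ_d(λ)} y^{ℓ_d^o(λ)}`. Then `P₁` is the partition generating function `genFun` of the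
weight `w` on odd part sizes and `0` on even ones, so its product formula has the factor
`1 + ∑_{c ≥ 1} w(c) q^{bc}` for each odd `b`. Putting `u = q^b`, the closed form of this factor is
`(1-u²)² ∑_c w(c) u^c = (1-u²)² + 2x u² + xy u (1+u²)`, a coefficientwise identity because
`w(c) - 2w(c-2) + w(c-4) = 0` for `c ≥ 4`: on each parity class `w` is linear in `c`.
-/

/-- The coefficient ring `ℤ[x,y]`. -/
noncomputable abbrev Rxy : Type := MvPolynomial (Fin 2) ℤ

/-- The variable `x` of `ℤ[x,y]`. -/
noncomputable def xv : Rxy := MvPolynomial.X 0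

/-- The variable `y` of `ℤ[x,y]`. -/
noncomputable def yv : Rxy := MvPolynomial.X 1

/-- `m(λ)`: the product of the multiplicities of the distinct part sizes of a partition,
i.e. the number of PDO designations of `λ`. -/
def pdoWeight {n : ℕ} (l : n.Partition) : ℕ :=
  ∏ a ∈ l.parts.toFinset, l.parts.count a

/-- `ℓ_d(λ)`: the number of distinct part sizes of a partition. -/
def numDistinct {n : ℕ} (l : n.Partition) : ℕ :=
  l.parts.toFinset.card

/-- `ℓ_d^o(λ)`: the number of distinct part sizes of `λ` occurring an odd number of times. -/
def numOddDistinct {n : ℕ} (l : n.Partition) : ℕ :=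
  (l.parts.toFinset.filter fun a => Odd (l.parts.count a)).card

/-- The series `∑_λ m(λ) x^{ℓ_d(λ)} y^{ℓ_d^o(λ)} q^{|λ|}` over partitions into odd parts,
i.e. `P₁(x,y,q)`, as a power series in `q` over `ℤ[x,y]`. -/
noncomputable def P1 : PowerSeries Rxy :=
  PowerSeries.mk fun n =>
    ∑ l ∈ Nat.Partition.odds n,
      (pdoWeight l : Rxy) * xv ^ numDistinct l * yv ^ numOddDistinct l

/-- The `m`-th factor (`m ≥ 1`) of the product:
`1 + 2x q^{4m-2}/(1-q^{4m-2})² + xy q^{2m-1}(1+q^{4m-2})/(1-q^{4m-2})²`.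
`Ring.inverse` yields the genuine inverse since `(1-q^{4m-2})²` is a unit. -/
noncomputable def factor1 (m : ℕ) : PowerSeries Rxy :=
  1 +
    2 * PowerSeries.C xv * PowerSeries.X ^ (4 * m - 2) *
      Ring.inverse ((1 - PowerSeries.X ^ (4 * m - 2)) ^ 2) +
    PowerSeries.C (xv * yv) *
      (PowerSeries.X ^ (2 * m - 1) * (1 + PowerSeries.X ^ (4 * m - 2))) *
      Ring.inverse ((1 - PowerSeries.X ^ (4 * m - 2)) ^ 2)

/-- The infinite product `∏_{m ≥ 1} factor1 m`, defined coefficientwise: since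
`factor1 m = 1 + O(q^{2m-1})`, the coefficient of `q^n` is that of any sufficiently long
partial product, e.g. `∏_{m=1}^{n+1}`. -/
noncomputable def prod1 : PowerSeries Rxy :=
  PowerSeries.mk fun n =>
    PowerSeries.coeff n (∏ m ∈ Finset.range (n + 1), factor1 (m + 1))

open PowerSeries Finset
open scoped PowerSeries.WithPiTopology

namespace Nat.Partition

section CommSemiring

variable {R : Type*} [CommSemiring R]

/-- `1 + ∑_{c ≥ 1} a(c) X^{ic}`, the factor of the part size `i` in the product formula for
`genFun`. -/
noncomputable def partFactor (i : ℕ) (a : ℕ → R) : R⟦X⟧ :=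
  PowerSeries.mk fun k => if k = 0 then 1 else if i ∣ k then a (k / i) else 0

theorem one_add_tsum_eq_partFactor [TopologicalSpace R] [T2Space R] (a : ℕ → R) {i : ℕ}
    (hi : i ≠ 0) : (1 + ∑' j, a (j + 1) • X ^ (i * (j + 1)) : R⟦X⟧) = partFactor i a := by
  ext k
  have hsum := (summable_genFun_term' (fun _ => a) hi).map_tsum _
    (WithPiTopology.continuous_coeff R k)
  simp only [map_add, hsum, map_smul, coeff_X_pow, smul_eq_mul, mul_ite, mul_one, mul_zero,
    coeff_one, partFactor, coeff_mk]
  rcases eq_or_ne k 0 with rfl | hk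
  · simp [hi]
  by_cases hdvd : i ∣ k
  · obtain ⟨c, rfl⟩ := hdvd
    obtain ⟨c, rfl⟩ := Nat.exists_eq_add_one_of_ne_zero (right_ne_zero_of_mul hk)
    rw [tsum_eq_single c fun j hj => if_neg (by simpa [hi] using hj.symm)]
    simp [hk, hi]
  · have : ∀ j, k ≠ i * (j + 1) := fun j h => hdvd ⟨_, h⟩
    simp [hk, hdvd, this]

theorem genFun_eq_prod_partFactor (f : ℕ → ℕ → R) {s : Finset ℕ} (h0 : 0 ∉ s)
    (hf : ∀ i ∉ s, f i = 0) : genFun f = ∏ i ∈ s, partFactor i (f i) := by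
  -- In the discrete topology on `R` the finite product is the limit in `hasProd_genFun`.
  let : TopologicalSpace R := ⊥
  have : DiscreteTopology R := ⟨rfl⟩
  set t : ℕ → R⟦X⟧ := fun i => 1 + ∑' j, f i (j + 1) • X ^ (i * (j + 1))
  have ht : ∀ i ∉ s, t i = 1 := fun i hi => by simp [t, hf i hi]
  have hgen : HasProd t (genFun f) :=
    ((add_left_injective 1).hasProd_iff fun i hi => ?_).mp (hasProd_genFun f)
  · rw [hgen.unique (hasProd_prod_of_ne_finset_one ht)]
    exact prod_congr rfl fun i hi => one_add_tsum_eq_partFactor _ (ne_of_mem_of_not_mem hi h0)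
  · obtain rfl : i = 0 := by simpa using hi
    exact ht 0 h0

theorem coeff_genFun_congr {f g : ℕ → ℕ → R} {n : ℕ} (h : ∀ i ≤ n, f i = g i) :
    coeff n (genFun f) = coeff n (genFun g) := by
  simp only [coeff_genFun]
  refine sum_congr rfl fun p _ => Finsupp.prod_congr fun i hi => ?_
  rw [h i (le_of_mem_parts (by simpa using hi))]

end CommSemiring

theorem partFactor_eq_expand {R : Type*} [CommRing R] (a : ℕ → R) {i : ℕ} (hi : i ≠ 0) :
    partFactor i a = expand i hi (PowerSeries.mk (Function.update a 0 1)) := by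
  ext k
  rcases eq_or_ne k 0 with rfl | hk
  · simp [partFactor, coeff_expand]
  by_cases hdvd : i ∣ k
  · have hik : ¬k < i := (Nat.le_of_dvd (Nat.pos_of_ne_zero hk) hdvd).not_gt
    simp [partFactor, coeff_expand, hk, hdvd, hik, hi, Nat.div_eq_zero_iff]
  · simp [partFactor, coeff_expand, hk, hdvd]

end Nat.Partition

def multWeight {R : Type*} [Semiring R] (x y : R) (c : ℕ) : R :=
  c * x * y ^ (c % 2)

theorem prod_multWeight_count {R : Type*} [CommSemiring R] {n : ℕ} (p : n.Partition) (x y : R) :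
    ∏ a ∈ p.parts.toFinset, multWeight x y (p.parts.count a) =
      pdoWeight p * x ^ numDistinct p * y ^ numOddDistinct p := by
  have hy : ∀ a, y ^ (p.parts.count a % 2) = if Odd (p.parts.count a) then y else 1 := fun a => by
    split_ifs with h
    · rw [Nat.odd_iff.mp h, pow_one]
    · rw [Nat.not_odd_iff.mp h, pow_zero]
  simp only [multWeight, prod_mul_distrib, hy, ← prod_filter, prod_const, pdoWeight, numDistinct,
    numOddDistinct, Nat.cast_prod]

open Nat.Partition

theorem one_sub_X_sq_sq_mul_mk_multWeight {R : Type*} [CommRing R] (x y : R) :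
    (1 - X ^ 2) ^ 2 * PowerSeries.mk (Function.update (multWeight x y) 0 1)
      = (1 - X ^ 2) ^ 2 + 2 * C x * X ^ 2 + C (x * y) * (X * (1 + X ^ 2)) := by
  set g := PowerSeries.mk (Function.update (multWeight x y) 0 1)
  have hlhs : (1 - X ^ 2) ^ 2 * g = g - (g * X ^ 2 + g * X ^ 2) + g * X ^ 4 := by ring
  have hrhs : ((1 : R⟦X⟧) - X ^ 2) ^ 2 + 2 * C x * X ^ 2 + C (x * y) * (X * (1 + X ^ 2)) =
      1 - (X ^ 2 + X ^ 2) + X ^ 4 + (C x * X ^ 2 + C x * X ^ 2) + C (x * y) * X +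
        C (x * y) * X ^ 3 := by
    ring
  rw [hlhs, hrhs]
  ext n
  rcases n with _ | _ | _ | _ | n
  all_goals simp [g, multWeight, coeff_mul_X_pow', coeff_X_pow, coeff_one, Function.update_apply]
  · ring
  · ring
  rw [show (n + 1 + 1 + 1 + 1) % 2 = n % 2 by omega]
  rcases eq_or_ne n 0 with rfl | hn
  · norm_num
    ring
  · simp only [if_neg hn]
    ring

theorem factor1_eq_partFactor (m : ℕ) :
    factor1 (m + 1) = partFactor (2 * m + 1) (multWeight xv yv) := by
  have hb : 2 * m + 1 ≠ 0 := by omega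
  set u : PowerSeries Rxy := X ^ (2 * m + 1)
  have key := congrArg (expand (2 * m + 1) hb) (one_sub_X_sq_sq_mul_mk_multWeight xv yv)
  simp only [map_mul, map_add, map_sub, map_pow, map_one, map_ofNat, expand_X, expand_C] at key
  rw [← map_mul C xv yv] at key
  have hunit : IsUnit ((1 - u ^ 2) ^ 2) := by
    simp [PowerSeries.isUnit_iff_constantCoeff, u]
  have hinv := Ring.mul_inverse_cancel _ hunit
  rw [partFactor_eq_expand _ hb]
  apply hunit.mul_left_cancel
  rw [key, factor1, show 4 * (m + 1) - 2 = (2 * m + 1) * 2 by omega,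
    show 2 * (m + 1) - 1 = 2 * m + 1 by omega, pow_mul]
  linear_combination (2 * C xv * u ^ 2 + C (xv * yv) * (u * (1 + u ^ 2))) * hinv

theorem P1_eq_genFun : P1 = genFun fun i c => if Odd i then multWeight xv yv c else 0 := by
  ext n : 1
  simp only [P1, coeff_mk, coeff_genFun, odds, restricted, sum_filter]
  refine sum_congr rfl fun p _ => ?_
  simp_rw [Finsupp.prod, Multiset.toFinsupp_support, Multiset.toFinsupp_apply]
  split_ifs with hodd
  · rw [← prod_multWeight_count]
    refine prod_congr rfl fun a ha => (if_pos ?_).symm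
    exact Nat.not_even_iff_odd.mp (hodd a (by simpa using ha))
  · obtain ⟨a, ha, heven⟩ : ∃ a ∈ p.parts, Even a := by simpa using hodd
    exact (prod_eq_zero (Multiset.mem_toFinset.mpr ha) (if_neg (Nat.not_odd_iff_even.mpr heven))).symm

/-- In `ℤ[x,y][[q]]`:
`∑_λ m(λ) x^{ℓ_d(λ)} y^{ℓ_d^o(λ)} q^{|λ|}
  = ∏_{m≥1} (1 + 2x q^{4m-2}/(1-q^{4m-2})² + xy q^{2m-1}(1+q^{4m-2})/(1-q^{4m-2})²)`. -/
theorem P1_eq_prod : P1 = prod1 := by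
  ext n : 1
  set s := (range (n + 1)).map ⟨(2 * · + 1), fun a b h => by simpa using h⟩
  have hs : ∀ i ≤ n, i ∈ s ↔ Odd i := fun i hi => by
    simp only [s, mem_map, mem_range]
    constructor
    · rintro ⟨a, -, rfl⟩
      exact odd_two_mul_add_one a
    · rintro ⟨a, rfl⟩
      exact ⟨a, by omega, rfl⟩
  set f : ℕ → ℕ → Rxy := fun i c => if i ∈ s then multWeight xv yv c else 0
  rw [P1_eq_genFun, coeff_genFun_congr (g := f) fun i hi => by simp only [f, hs i hi],
    genFun_eq_prod_partFactor f (by simp [s]) fun i hi => funext fun _ => if_neg hi,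
    prod1, coeff_mk, prod_map]
  refine congrArg _ (prod_congr rfl fun m hm => ?_)
  rw [factor1_eq_partFactor]
  exact congrArg _ (funext fun _ => if_pos (mem_map_of_mem _ hm))
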